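/- Let K be an algebraically closed field and consider the filtration F on K[x,y] with F_0 = K, F_1 = K-span{1, x, y, x^3}, F_k = F_1^k for k > 1. Let φ: 𝔸²_K → ℙ³_K be φ(x,y) = [1 : x : y : x³], and let X^F be the closure of φ(𝔸²) in ℙ³. Then for every a = (a_1, a_2) ∈ K², the closures in X^F of the curves H_1(a) = {(a_1, y) : y ∈ K} and H_2(a) = {(x, a_2 − x³) : x ∈ K} meet the hypersurface at infinity X^F \ φ(𝔸²) only in the points [0:0:1:0] and [0:0:−1:1] respectively; in particular their closures do not intersect at infinity. -/

import Mathlib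

/-!
A point of `X^F` lies on the cubic `X₀² X₃ = X₁³`, and one with `X₀ ≠ 0` is
`φ(X₁/X₀, X₂/X₀)`; so the points at infinity are the `[0 : 0 : u : w]`. The closure of `H₁(a)`
lies in the plane `X₃ = a₁³ X₀`, which leaves only `[0 : 0 : 1 : 0]`; the closure of `H₂(a)`
lies in `X₂ + X₃ = a₂ X₀`, which leaves only `[0 : 0 : -1 : 1]`. Both points are reached:
rescaling `φ(a₁, 1/t)` by `t` and `φ(1/t, a₂ - 1/t³)` by `t³` gives polynomial curves in `t`,
and a homogeneous polynomial vanishing on such a curve for `t ≠ 0` vanishes at `t = 0`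
since `K` is infinite.
-/

/-- The Zariski closure of a set of points of the projective space `ℙⁿ(K)`: the set of
points at which every homogeneous polynomial vanishing on `S` vanishes. -/
def zariskiClosure {K : Type*} [Field K] {n : ℕ}
    (S : Set (Projectivization K (Fin n → K))) : Set (Projectivization K (Fin n → K)) :=
  {x | ∀ (m : ℕ) (p : MvPolynomial (Fin n) K), p.IsHomogeneous m →
    (∀ y ∈ S, MvPolynomial.eval y.rep p = 0) → MvPolynomial.eval x.rep p = 0}

/-- The embedding `φ : 𝔸² → ℙ³`, `(x, y) ↦ [1 : x : y : x³]`, associated to the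
filtration with `F₁ = K⟨1, x, y, x³⟩`. -/
noncomputable def phiF {K : Type*} [Field K] (p : K × K) :
    Projectivization K (Fin 4 → K) :=
  Projectivization.mk K ![1, p.1, p.2, p.1 ^ 3]
    (by intro h; have := congrFun h 0; simp at this)

open MvPolynomial

namespace MvPolynomial.IsHomogeneous

variable {R σ : Type*} [CommSemiring R] {p : MvPolynomial σ R} {m : ℕ}

theorem eval_smul (hp : p.IsHomogeneous m) (c : R) (v : σ → R) :
    eval (c • v) p = c ^ m * eval v p := by
  rw [eval_eq, eval_eq, Finset.mul_sum]
  refine Finset.sum_congr rfl fun d hd => ?_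
  have hdeg : ∑ i ∈ d.support, d i = m := by
    simpa [Finsupp.weight_apply, Finsupp.sum] using hp (mem_support_iff.mp hd)
  simp only [Pi.smul_apply, smul_eq_mul, mul_pow, Finset.prod_mul_distrib,
    Finset.prod_pow_eq_pow_sum, hdeg]
  ring

theorem eval_rep_mk_eq_zero_iff {K : Type*} [Field K] {p : MvPolynomial σ K}
    (hp : p.IsHomogeneous m) {v : σ → K} (hv : v ≠ 0) :
    eval (Projectivization.mk K v hv).rep p = 0 ↔ eval v p = 0 := by
  obtain ⟨c, hc⟩ := Projectivization.exists_smul_eq_mk_rep K v hv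
  rw [← hc, Units.smul_def, hp.eval_smul]
  simp [c.ne_zero]

end MvPolynomial.IsHomogeneous

theorem MvPolynomial.polynomial_eval_aeval {R σ : Type*} [CommSemiring R]
    (p : MvPolynomial σ R) (g : σ → Polynomial R) (t : R) :
    (aeval g p).eval t = eval (fun i => (g i).eval t) p := by
  rw [aeval_def, polynomial_eval_eval₂]
  congr
  ext
  simp

section ZariskiClosure

variable {K : Type*} [Field K] {n : ℕ}

theorem zariskiClosure_mono {S T : Set (Projectivization K (Fin n → K))} (h : S ⊆ T) :
    zariskiClosure S ⊆ zariskiClosure T :=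
  fun _ hx m p hp hT => hx m p hp fun y hy => hT y (h hy)

theorem eval_eq_zero_of_mk_mem_zariskiClosure {S : Set (Projectivization K (Fin n → K))}
    {v : Fin n → K} {hv : v ≠ 0} (hx : Projectivization.mk K v hv ∈ zariskiClosure S)
    {m : ℕ} {p : MvPolynomial (Fin n) K} (hp : p.IsHomogeneous m)
    (hS : ∀ y ∈ S, eval y.rep p = 0) : eval v p = 0 :=
  (hp.eval_rep_mk_eq_zero_iff hv).mp (hx m p hp hS)

theorem mk_mem_zariskiClosure_of_polynomial_curve [Infinite K]
    {S : Set (Projectivization K (Fin n → K))} (g : Fin n → Polynomial K)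
    {v : Fin n → K} (hv : v ≠ 0) (hg₀ : ∀ i, (g i).eval 0 = v i)
    (hS : ∀ t ≠ 0, ∃ y ∈ S, ∃ c : K, (fun i => (g i).eval t) = c • y.rep) :
    Projectivization.mk K v hv ∈ zariskiClosure S := by
  intro m p hp hpS
  rw [hp.eval_rep_mk_eq_zero_iff]
  have hcurve : aeval g p = 0 := by
    refine Polynomial.eq_zero_of_infinite_isRoot _
      ((Set.finite_singleton 0).infinite_compl.mono fun t ht => ?_)
    obtain ⟨y, hy, c, hc⟩ := hS t ht
    rw [Set.mem_ofPred_eq, Polynomial.IsRoot, polynomial_eval_aeval, hc, hp.eval_smul,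
      hpS y hy, mul_zero]
  simpa [polynomial_eval_aeval, hg₀] using congrArg (Polynomial.eval 0) hcurve

end ZariskiClosure

def infinityXF (K : Type*) [Field K] : Set (Projectivization K (Fin 4 → K)) :=
  zariskiClosure (Set.range (phiF (K := K))) \ Set.range (phiF (K := K))

section XF

variable {K : Type*} [Field K]

theorem eval_eq_zero_of_mk_mem_zariskiClosure_image_phiF {T : Set (K × K)}
    {v : Fin 4 → K} {hv : v ≠ 0}
    (hx : Projectivization.mk K v hv ∈ zariskiClosure (phiF '' T))
    {m : ℕ} {p : MvPolynomial (Fin 4) K} (hp : p.IsHomogeneous m)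
    (hT : ∀ q ∈ T, eval ![1, q.1, q.2, q.1 ^ 3] p = 0) : eval v p = 0 := by
  refine eval_eq_zero_of_mk_mem_zariskiClosure hx hp ?_
  rintro _ ⟨q, hq, rfl⟩
  exact (hp.eval_rep_mk_eq_zero_iff _).mpr (hT q hq)

theorem mk_mem_zariskiClosure_image_phiF [Infinite K] {T : Set (K × K)}
    (g : Fin 4 → Polynomial K) {v : Fin 4 → K} (hv : v ≠ 0) (hg₀ : ∀ i, (g i).eval 0 = v i)
    (hT : ∀ t ≠ 0, ∃ q ∈ T, ∃ c : K, (fun i => (g i).eval t) = c • ![1, q.1, q.2, q.1 ^ 3]) :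
    Projectivization.mk K v hv ∈ zariskiClosure (phiF '' T) := by
  refine mk_mem_zariskiClosure_of_polynomial_curve g hv hg₀ fun t ht => ?_
  obtain ⟨q, hq, c, hc⟩ := hT t ht
  obtain ⟨u, hu⟩ := Projectivization.exists_smul_eq_mk_rep K
    (![1, q.1, q.2, q.1 ^ 3] : Fin 4 → K) fun h => by simpa using congrFun h 0
  refine ⟨phiF q, Set.mem_image_of_mem _ hq, c * ↑u⁻¹, ?_⟩
  rw [phiF, ← hu, hc, Units.smul_def, smul_smul, mul_assoc, Units.inv_mul, mul_one]

theorem isHomogeneous_cubic :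
    (X 0 ^ 2 * X 3 - X 1 ^ 3 : MvPolynomial (Fin 4) K).IsHomogeneous 3 :=
  (((isHomogeneous_X K 0).pow 2).mul (isHomogeneous_X K 3)).sub ((isHomogeneous_X K 1).pow 3)

theorem mk_mem_range_phiF_iff {v : Fin 4 → K} (hv : v ≠ 0) (hcub : v 0 ^ 2 * v 3 = v 1 ^ 3) :
    Projectivization.mk K v hv ∈ Set.range (phiF (K := K)) ↔ v 0 ≠ 0 := by
  constructor
  · rintro ⟨q, hq⟩
    obtain ⟨c, hc⟩ := (Projectivization.mk_eq_mk_iff' K _ _ _ hv).mp hq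
    have h0 : c * v 0 = 1 := by simpa using congrFun hc 0
    exact right_ne_zero_of_mul_eq_one h0
  · intro h0
    refine ⟨(v 1 / v 0, v 2 / v 0), (Projectivization.mk_eq_mk_iff' K _ _ _ hv).mpr ⟨(v 0)⁻¹, ?_⟩⟩
    ext i
    fin_cases i
    all_goals simp [Matrix.cons_val]
    all_goals field_simp
    linear_combination hcub

theorem cubic_eq_of_mk_mem_zariskiClosure_range {v : Fin 4 → K} {hv : v ≠ 0}
    (hx : Projectivization.mk K v hv ∈ zariskiClosure (Set.range (phiF (K := K)))) :
    v 0 ^ 2 * v 3 = v 1 ^ 3 := by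
  rw [← Set.image_univ] at hx
  simpa [sub_eq_zero] using
    eval_eq_zero_of_mk_mem_zariskiClosure_image_phiF hx isHomogeneous_cubic fun q _ => by simp

theorem mk_mem_infinityXF_iff {v : Fin 4 → K} {hv : v ≠ 0} :
    Projectivization.mk K v hv ∈ infinityXF K ↔
      Projectivization.mk K v hv ∈ zariskiClosure (Set.range (phiF (K := K))) ∧ v 0 = 0 := by
  refine and_congr_right fun hx => ?_
  rw [mk_mem_range_phiF_iff hv (cubic_eq_of_mk_mem_zariskiClosure_range hx), not_not]

theorem eq_zero_of_mk_mem_infinityXF {v : Fin 4 → K} {hv : v ≠ 0}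
    (hx : Projectivization.mk K v hv ∈ infinityXF K) : v 0 = 0 ∧ v 1 = 0 := by
  obtain ⟨hcl, h0⟩ := mk_mem_infinityXF_iff.mp hx
  have hcub := cubic_eq_of_mk_mem_zariskiClosure_range hcl
  exact ⟨h0, pow_eq_zero_iff three_ne_zero |>.mp (by rw [← hcub, h0]; ring)⟩

theorem mk_mem_zariskiClosure_inter_infinityXF {T : Set (K × K)} {v : Fin 4 → K} {hv : v ≠ 0}
    (hx : Projectivization.mk K v hv ∈ zariskiClosure (phiF '' T)) (h0 : v 0 = 0) :
    Projectivization.mk K v hv ∈ zariskiClosure (phiF '' T) ∩ infinityXF K :=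
  ⟨hx, mk_mem_infinityXF_iff.mpr ⟨zariskiClosure_mono (Set.image_subset_range _ _) hx, h0⟩⟩

theorem zariskiClosure_vertical_line_inter_infinityXF [Infinite K] (a₁ : K) :
    zariskiClosure (phiF '' {p : K × K | p.1 = a₁}) ∩ infinityXF K =
      {Projectivization.mk K ![0, 0, 1, 0] fun h => by simpa using congrFun h 2} := by
  refine Set.Subset.antisymm (fun x => ?_) (Set.singleton_subset_iff.mpr ?_)
  · induction x using Projectivization.ind with | h v hv => ?_
    rintro ⟨hcl, hinf⟩
    obtain ⟨h0, h1⟩ := eq_zero_of_mk_mem_infinityXF hinf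
    have h3 : v 3 = a₁ ^ 3 * v 0 := by
      simpa [sub_eq_zero] using eval_eq_zero_of_mk_mem_zariskiClosure_image_phiF hcl
        ((isHomogeneous_X K 3).sub ((isHomogeneous_X K 0).C_mul (a₁ ^ 3)))
        (by rintro q rfl; simp)
    rw [Set.mem_singleton_iff, Projectivization.mk_eq_mk_iff']
    exact ⟨v 2, by ext i; fin_cases i <;> simp [h0, h1, h3]⟩
  · exact mk_mem_zariskiClosure_inter_infinityXF (mk_mem_zariskiClosure_image_phiF
      ![.X, .C a₁ * .X, 1, .C (a₁ ^ 3) * .X] _ (by intro i; fin_cases i <;> simp)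
      fun t ht => ⟨(a₁, t⁻¹), rfl, t, by ext i; fin_cases i <;> simp [ht] <;> ring⟩) rfl

theorem zariskiClosure_cubic_curve_inter_infinityXF [Infinite K] (a₂ : K) :
    zariskiClosure (phiF '' {p : K × K | p.2 = a₂ - p.1 ^ 3}) ∩ infinityXF K =
      {Projectivization.mk K ![0, 0, -1, 1] fun h => by simpa using congrFun h 3} := by
  refine Set.Subset.antisymm (fun x => ?_) (Set.singleton_subset_iff.mpr ?_)
  · induction x using Projectivization.ind with | h v hv => ?_
    rintro ⟨hcl, hinf⟩
    obtain ⟨h0, h1⟩ := eq_zero_of_mk_mem_infinityXF hinf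
    have h23 : v 2 + v 3 = a₂ * v 0 := by
      simpa [sub_eq_zero] using eval_eq_zero_of_mk_mem_zariskiClosure_image_phiF hcl
        (((isHomogeneous_X K 2).add (isHomogeneous_X K 3)).sub
          ((isHomogeneous_X K 0).C_mul a₂))
        (by rintro q hq; simp [Set.mem_ofPred_eq.mp hq])
    have h2 : v 2 = -v 3 := by linear_combination h23 + a₂ * h0
    rw [Set.mem_singleton_iff, Projectivization.mk_eq_mk_iff']
    exact ⟨v 3, by ext i; fin_cases i <;> simp [h0, h1, h2]⟩
  · exact mk_mem_zariskiClosure_inter_infinityXF (mk_mem_zariskiClosure_image_phiF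
      ![.X ^ 3, .X ^ 2, .C a₂ * .X ^ 3 - 1, 1] _ (by intro i; fin_cases i <;> simp)
      fun t ht => ⟨(t⁻¹, a₂ - t⁻¹ ^ 3), rfl, t ^ 3, by
        ext i; fin_cases i <;> simp <;> field_simp⟩) rfl

end XF

/-- For the completion `X^F` of `𝔸²` given by `φ(x,y) = [1:x:y:x³]`
and every `a = (a₁, a₂) ∈ K²`, the closure of the curve `H₁(a) = {x = a₁}` meets the set
at infinity `X^F ∖ φ(𝔸²)` exactly in `[0:0:1:0]`, the closure of the curve
`H₂(a) = {y = a₂ - x³}` meets it exactly in `[0:0:-1:1]`; in particular the two closures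
do not intersect at infinity. -/
theorem closures_at_infinity_xF
    {K : Type*} [Field K] [IsAlgClosed K] (a₁ a₂ : K) :
    zariskiClosure (phiF '' {p : K × K | p.1 = a₁}) ∩
        (zariskiClosure (Set.range (phiF (K := K))) \ Set.range (phiF (K := K))) =
      {Projectivization.mk K ![0, 0, 1, 0]
        (by intro h; have := congrFun h 2; simp at this)} ∧
    zariskiClosure (phiF '' {p : K × K | p.2 = a₂ - p.1 ^ 3}) ∩
        (zariskiClosure (Set.range (phiF (K := K))) \ Set.range (phiF (K := K))) =
      {Projectivization.mk K ![0, 0, -1, 1]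
        (by intro h; have := congrFun h 3; simp at this)} ∧
    zariskiClosure (phiF '' {p : K × K | p.1 = a₁}) ∩
        zariskiClosure (phiF '' {p : K × K | p.2 = a₂ - p.1 ^ 3}) ∩
        (zariskiClosure (Set.range (phiF (K := K))) \ Set.range (phiF (K := K))) =
      ∅ := by
  have h₁ := zariskiClosure_vertical_line_inter_infinityXF (K := K) a₁
  have h₂ := zariskiClosure_cubic_curve_inter_infinityXF (K := K) a₂
  refine ⟨h₁, h₂, ?_⟩
  change _ ∩ _ ∩ infinityXF K = ∅
  rw [Set.inter_inter_distrib_right, h₁, h₂, Set.singleton_inter_eq_empty,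
    Set.mem_singleton_iff, Projectivization.mk_eq_mk_iff']
  rintro ⟨c, hc⟩
  have hc₂ := congrFun hc 2
  have hc₃ := congrFun hc 3
  simp_all
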